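/- Each of the following functions solves the mode ODE with the indicated parameters on (0,1): φ(r) = (r²−3)/(1+r²) with (l,m) = (0,1) and λ = 0; φ(r) = 1/(1+r²) with (l,m) = (0,1) and λ = 1; φ(r) = r/(1+r²) with (l,m) = (1,0) and λ = 1; φ(r) = r/(1+r²) with (l,m) = (1,1) and λ = 0; and φ(r) = r²/(1+r²) with (l,m) = (2,1) and λ = 0. -/

import Mathlib

/-- The potential V_{l,m}. -/
noncomputable def Vpot (l m : ℕ) (r : ℝ) : ℂ :=
  ((4 + 2*(m:ℂ)*((m:ℂ)+1) - (l:ℂ)*((l:ℂ)+1)) * (r:ℂ)^4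
      + (2*(m:ℂ)*((m:ℂ)+1) - 12) * (r:ℂ)^2 + (l:ℂ)*((l:ℂ)+1))
    / ((r:ℂ)^2 * (1 + (r:ℂ)^2)^2)

/-- The mode ODE with parameters (l,m,λ) on (0,1). -/
def SolvesModeODE (l m : ℕ) (lam : ℂ) (φ : ℝ → ℂ) : Prop :=
  ∀ r ∈ Set.Ioo (0:ℝ) 1,
    (1 - (r:ℂ)^2) * deriv (deriv φ) r
      + (2/(r:ℂ) - 2*(lam+1)*(r:ℂ)) * deriv φ r
      - (lam^2 + lam + Vpot l m r) * φ r = 0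

lemma hune (r : ℝ) : (1 + (r:ℂ)^2) ≠ 0 := by
  have : (1 + (r:ℂ)^2) = ((1 + r^2 : ℝ) : ℂ) := by push_cast; ring
  rw [this, Complex.ofReal_ne_zero]
  positivity

-- φ1 = (z²−3)/(1+z²)
lemma hd1a (r : ℝ) :
    HasDerivAt (fun x : ℝ => ((x:ℂ)^2 - 3) / (1 + (x:ℂ)^2))
      (8*(r:ℂ) / (1 + (r:ℂ)^2)^2) r := by
  have hu := hune r
  have h : HasDerivAt (fun z : ℂ => (z^2 - 3) / (1 + z^2))
      ((2*(r:ℂ)^1 * (1 + (r:ℂ)^2) - ((r:ℂ)^2 - 3) * (2*(r:ℂ)^1)) / (1 + (r:ℂ)^2)^2) r :=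
    (((hasDerivAt_pow 2 (r:ℂ)).sub_const 3).div
      ((hasDerivAt_pow 2 (r:ℂ)).const_add 1) hu)
  refine (h.comp_ofReal).congr_deriv ?_
  all_goals field_simp
  all_goals ring

lemma hd1b (r : ℝ) :
    HasDerivAt (fun x : ℝ => 8*(x:ℂ) / (1 + (x:ℂ)^2)^2)
      ((8 - 24*(r:ℂ)^2) / (1 + (r:ℂ)^2)^3) r := by
  have hu := hune r
  have hu2 : ((1 + (r:ℂ)^2)^2) ≠ 0 := pow_ne_zero _ hu
  have h : HasDerivAt (fun z : ℂ => 8*z / (1 + z^2)^2)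
      ((8 * (1 + (r:ℂ)^2)^2 - 8*(r:ℂ) * (2*(1+(r:ℂ)^2)^1 * (2*(r:ℂ)^1))) / ((1 + (r:ℂ)^2)^2)^2) r := by
    refine HasDerivAt.div ?_ ?_ hu2
    · have hm := (hasDerivAt_id (r:ℂ)).const_mul (8:ℂ)
      rw [mul_one] at hm
      exact hm
    exact HasDerivAt.fun_pow ((hasDerivAt_pow 2 (r:ℂ)).const_add 1) 2
  refine (h.comp_ofReal).congr_deriv ?_
  all_goals field_simp
  all_goals ring

-- φ2 = 1/(1+z²)
lemma hd2a (r : ℝ) :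
    HasDerivAt (fun x : ℝ => 1 / (1 + (x:ℂ)^2))
      (-2*(r:ℂ) / (1 + (r:ℂ)^2)^2) r := by
  have hu := hune r
  have h : HasDerivAt (fun z : ℂ => 1 / (1 + z^2))
      ((0 * (1 + (r:ℂ)^2) - 1 * (2*(r:ℂ)^1)) / (1 + (r:ℂ)^2)^2) r :=
    (hasDerivAt_const (r:ℂ) 1).div ((hasDerivAt_pow 2 (r:ℂ)).const_add 1) hu
  refine (h.comp_ofReal).congr_deriv ?_
  all_goals field_simp
  all_goals ring

lemma hd2b (r : ℝ) :
    HasDerivAt (fun x : ℝ => -2*(x:ℂ) / (1 + (x:ℂ)^2)^2)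
      ((6*(r:ℂ)^2 - 2) / (1 + (r:ℂ)^2)^3) r := by
  have hu := hune r
  have hu2 : ((1 + (r:ℂ)^2)^2) ≠ 0 := pow_ne_zero _ hu
  have h : HasDerivAt (fun z : ℂ => -2*z / (1 + z^2)^2)
      ((-2 * (1 + (r:ℂ)^2)^2 - (-2*(r:ℂ)) * (2*(1+(r:ℂ)^2)^1 * (2*(r:ℂ)^1))) / ((1 + (r:ℂ)^2)^2)^2) r := by
    refine HasDerivAt.div ?_ ?_ hu2
    · have hm := (hasDerivAt_id (r:ℂ)).const_mul ((-2):ℂ)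
      rw [mul_one] at hm
      exact hm
    exact HasDerivAt.fun_pow ((hasDerivAt_pow 2 (r:ℂ)).const_add 1) 2
  refine (h.comp_ofReal).congr_deriv ?_
  all_goals field_simp
  all_goals ring

-- φ3 = z/(1+z²)
lemma hd3a (r : ℝ) :
    HasDerivAt (fun x : ℝ => (x:ℂ) / (1 + (x:ℂ)^2))
      ((1 - (r:ℂ)^2) / (1 + (r:ℂ)^2)^2) r := by
  have hu := hune r
  have h : HasDerivAt (fun z : ℂ => z / (1 + z^2))
      ((1 * (1 + (r:ℂ)^2) - (r:ℂ) * (2*(r:ℂ)^1)) / (1 + (r:ℂ)^2)^2) r :=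
    (hasDerivAt_id (r:ℂ)).div ((hasDerivAt_pow 2 (r:ℂ)).const_add 1) hu
  refine (h.comp_ofReal).congr_deriv ?_
  all_goals field_simp
  all_goals ring

lemma hd3b (r : ℝ) :
    HasDerivAt (fun x : ℝ => (1 - (x:ℂ)^2) / (1 + (x:ℂ)^2)^2)
      ((2*(r:ℂ)^3 - 6*(r:ℂ)) / (1 + (r:ℂ)^2)^3) r := by
  have hu := hune r
  have hu2 : ((1 + (r:ℂ)^2)^2) ≠ 0 := pow_ne_zero _ hu
  have h : HasDerivAt (fun z : ℂ => (1 - z^2) / (1 + z^2)^2)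
      (((-(2*(r:ℂ)^1)) * (1 + (r:ℂ)^2)^2 - (1 - (r:ℂ)^2) * (2*(1+(r:ℂ)^2)^1 * (2*(r:ℂ)^1))) / ((1 + (r:ℂ)^2)^2)^2) r := by
    refine HasDerivAt.div ((hasDerivAt_pow 2 (r:ℂ)).const_sub 1) ?_ hu2
    exact HasDerivAt.fun_pow ((hasDerivAt_pow 2 (r:ℂ)).const_add 1) 2
  refine (h.comp_ofReal).congr_deriv ?_
  all_goals field_simp
  all_goals ring

-- φ5 = z²/(1+z²)
lemma hd5a (r : ℝ) :
    HasDerivAt (fun x : ℝ => (x:ℂ)^2 / (1 + (x:ℂ)^2))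
      (2*(r:ℂ) / (1 + (r:ℂ)^2)^2) r := by
  have hu := hune r
  have h : HasDerivAt (fun z : ℂ => z^2 / (1 + z^2))
      ((2*(r:ℂ)^1 * (1 + (r:ℂ)^2) - (r:ℂ)^2 * (2*(r:ℂ)^1)) / (1 + (r:ℂ)^2)^2) r :=
    (hasDerivAt_pow 2 (r:ℂ)).div ((hasDerivAt_pow 2 (r:ℂ)).const_add 1) hu
  refine (h.comp_ofReal).congr_deriv ?_
  all_goals field_simp
  all_goals ring

lemma hd5b (r : ℝ) :
    HasDerivAt (fun x : ℝ => 2*(x:ℂ) / (1 + (x:ℂ)^2)^2)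
      ((2 - 6*(r:ℂ)^2) / (1 + (r:ℂ)^2)^3) r := by
  have hu := hune r
  have hu2 : ((1 + (r:ℂ)^2)^2) ≠ 0 := pow_ne_zero _ hu
  have h : HasDerivAt (fun z : ℂ => 2*z / (1 + z^2)^2)
      ((2 * (1 + (r:ℂ)^2)^2 - 2*(r:ℂ) * (2*(1+(r:ℂ)^2)^1 * (2*(r:ℂ)^1))) / ((1 + (r:ℂ)^2)^2)^2) r := by
    refine HasDerivAt.div ?_ ?_ hu2
    · have hm := (hasDerivAt_id (r:ℂ)).const_mul (2:ℂ)
      rw [mul_one] at hm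
      exact hm
    exact HasDerivAt.fun_pow ((hasDerivAt_pow 2 (r:ℂ)).const_add 1) 2
  refine (h.comp_ofReal).congr_deriv ?_
  all_goals field_simp
  all_goals ring

/-- The radial profiles of the symmetry-generated mode solutions solve the mode ODE
with the indicated parameters. -/
theorem symmetry_profiles_solve_mode_ode :
    SolvesModeODE 0 1 0 (fun r => ((r:ℂ)^2 - 3) / (1 + (r:ℂ)^2)) ∧
    SolvesModeODE 0 1 1 (fun r => 1 / (1 + (r:ℂ)^2)) ∧
    SolvesModeODE 1 0 1 (fun r => (r:ℂ) / (1 + (r:ℂ)^2)) ∧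
    SolvesModeODE 1 1 0 (fun r => (r:ℂ) / (1 + (r:ℂ)^2)) ∧
    SolvesModeODE 2 1 0 (fun r => (r:ℂ)^2 / (1 + (r:ℂ)^2)) := by
  have e1 : deriv (fun x : ℝ => ((x:ℂ)^2 - 3) / (1 + (x:ℂ)^2))
      = fun x : ℝ => 8*(x:ℂ) / (1 + (x:ℂ)^2)^2 := funext fun x => (hd1a x).deriv
  have e2 : deriv (fun x : ℝ => 1 / (1 + (x:ℂ)^2))
      = fun x : ℝ => -2*(x:ℂ) / (1 + (x:ℂ)^2)^2 := funext fun x => (hd2a x).deriv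
  have e3 : deriv (fun x : ℝ => (x:ℂ) / (1 + (x:ℂ)^2))
      = fun x : ℝ => (1 - (x:ℂ)^2) / (1 + (x:ℂ)^2)^2 := funext fun x => (hd3a x).deriv
  have e5 : deriv (fun x : ℝ => (x:ℂ)^2 / (1 + (x:ℂ)^2))
      = fun x : ℝ => 2*(x:ℂ) / (1 + (x:ℂ)^2)^2 := funext fun x => (hd5a x).deriv
  refine ⟨?_, ?_, ?_, ?_, ?_⟩ <;>
  · intro r hr
    have hr0 : (r:ℂ) ≠ 0 := by
      simpa using Complex.ofReal_ne_zero.mpr (ne_of_gt hr.1)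
    have hu := hune r
    first
    | rw [e1, (hd1b r).deriv]
    | rw [e2, (hd2b r).deriv]
    | rw [e3, (hd3b r).deriv]
    | rw [e5, (hd5b r).deriv]
    simp only [Vpot]
    push_cast
    field_simp
    ring
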